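/- Let a_1, a_2, a_3, a_4 ∈ ℝ² form a convex quadrilateral in cyclic order. Then the two regions H_1^I ∩ H_2^O ∩ H_3^O ∩ H_4^O and H_3^I ∩ H_1^O ∩ H_2^O ∩ H_4^O cannot both be nonempty. -/

import Mathlib

/-- Twice the signed area of the triangle `p q r`; its sign tells on which side
of the directed line through `p` and `q` the point `r` lies. -/
def det2 (p q r : ℝ × ℝ) : ℝ :=
  (q.1 - p.1) * (r.2 - p.2) - (q.2 - p.2) * (r.1 - p.1)

/-- `v 0, v 1, v 2, v 3` form a convex quadrilateral in cyclic order: for each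
`i`, the points `v (i+2)` and `v (i+3)` lie strictly on the same side of the
line through `v i` and `v (i+1)`. -/
def ConvexCyclic (v : Fin 4 → ℝ × ℝ) : Prop :=
  ∀ i : Fin 4, 0 < det2 (v i) (v (i+1)) (v (i+2)) * det2 (v i) (v (i+1)) (v (i+3))

/-- The outer open half-plane of the edge `v i, v (i+1)`: the open half-plane
bounded by the line through `v i` and `v (i+1)` not containing `v (i+2)`
(and `v (i+3)`). -/
def Hout (v : Fin 4 → ℝ × ℝ) (i : Fin 4) : Set (ℝ × ℝ) :=
  {x | det2 (v i) (v (i+1)) x * det2 (v i) (v (i+1)) (v (i+2)) < 0}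

/-- The inner open half-plane of the edge `v i, v (i+1)`: the open half-plane
bounded by the line through `v i` and `v (i+1)` containing `v (i+2)`. -/
def Hin (v : Fin 4 → ℝ × ℝ) (i : Fin 4) : Set (ℝ × ℝ) :=
  {x | 0 < det2 (v i) (v (i+1)) x * det2 (v i) (v (i+1)) (v (i+2))}

/-!
Write `dᵢ = det2 vᵢ vᵢ₊₁ vᵢ₊₂` and `Fᵢ(p) = det2 vᵢ vᵢ₊₁ p`. The affine functions `F₀, F₁, F₃`
satisfy `(d₃ - d₂) F₀ + d₃ F₁ + d₀ F₃ = d₀ d₃`. For a counterclockwise quadrilateral a point with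
`F₀ > 0`, `F₁ < 0`, `F₃ < 0` therefore forces `d₂ < d₃`, and by the same identity for the
quadrilateral started at `v₂`, a point with `F₂ > 0`, `F₃ < 0`, `F₁ < 0` forces `d₀ < d₁`.
Both cannot hold, because `d₀ + d₂ = d₁ + d₃` (each side is twice the signed area).
The clockwise case reduces to this one by the reflection `(x, y) ↦ (y, x)`, which
negates every `det2` and so preserves convexity and all the half-planes.
-/

lemma det2_rotate (p q r : ℝ × ℝ) : det2 p q r = det2 q r p := by
  unfold det2; ring

lemma det2_swap (p q r : ℝ × ℝ) : det2 p.swap q.swap r = -det2 p q r.swap := by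
  unfold det2; simp only [Prod.fst_swap, Prod.snd_swap]; ring

lemma det2_add_det2 (a b c d : ℝ × ℝ) :
    det2 a b c + det2 c d a = det2 b c d + det2 d a b := by
  unfold det2; ring

lemma det2_affine_relation (a b c d p : ℝ × ℝ) :
    (det2 d a b - det2 c d a) * det2 a b p + det2 d a b * det2 b c p + det2 a b c * det2 d a p =
      det2 a b c * det2 d a b := by
  unfold det2; ring

lemma det2_lt_of_inside_of_outside_of_outside {a b c d p : ℝ × ℝ}
    (habc : 0 < det2 a b c) (hdab : 0 < det2 d a b)
    (hab : 0 < det2 a b p) (hbc : det2 b c p < 0) (hda : det2 d a p < 0) :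
    det2 c d a < det2 d a b := by
  have key : 0 < (det2 d a b - det2 c d a) * det2 a b p := by
    nlinarith [det2_affine_relation a b c d p, mul_pos hdab habc]
  exact sub_pos.mp (pos_of_mul_pos_left key hab.le)

variable {v : Fin 4 → ℝ × ℝ}

lemma ConvexCyclic.comp_swap (h : ConvexCyclic v) : ConvexCyclic (Prod.swap ∘ v) := fun i => by
  simpa only [Function.comp_apply, det2_swap, Prod.swap_swap, neg_mul_neg] using h i

lemma Hin_comp_swap (i : Fin 4) : Hin (Prod.swap ∘ v) i = Prod.swap ⁻¹' Hin v i := by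
  ext p
  simp only [Hin, Set.mem_ofPred_eq, Set.mem_preimage, Function.comp_apply, det2_swap,
    Prod.swap_swap, neg_mul_neg]

lemma Hout_comp_swap (i : Fin 4) : Hout (Prod.swap ∘ v) i = Prod.swap ⁻¹' Hout v i := by
  ext p
  simp only [Hout, Set.mem_ofPred_eq, Set.mem_preimage, Function.comp_apply, det2_swap,
    Prod.swap_swap, neg_mul_neg]

lemma ConvexCyclic.det2_pos (h : ConvexCyclic v) (h0 : 0 < det2 (v 0) (v 1) (v 2)) :
    0 < det2 (v 1) (v 2) (v 3) ∧ 0 < det2 (v 2) (v 3) (v 0) ∧ 0 < det2 (v 3) (v 0) (v 1) := by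
  have h3 : 0 < det2 (v 3) (v 0) (v 1) := by
    rw [det2_rotate]; exact pos_of_mul_pos_right (h 0) h0.le
  have h2 : 0 < det2 (v 2) (v 3) (v 0) := by
    rw [det2_rotate]; exact pos_of_mul_pos_right (h 3) h3.le
  have h1 : 0 < det2 (v 1) (v 2) (v 3) := by
    rw [det2_rotate]; exact pos_of_mul_pos_right (h 2) h2.le
  exact ⟨h1, h2, h3⟩

lemma opposite_edges_not_both_good_of_det2_pos (hconv : ConvexCyclic v)
    (h0 : 0 < det2 (v 0) (v 1) (v 2)) :
    ¬ ((Hin v 0 ∩ Hout v 1 ∩ Hout v 2 ∩ Hout v 3).Nonempty ∧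
       (Hin v 2 ∩ Hout v 0 ∩ Hout v 1 ∩ Hout v 3).Nonempty) := by
  rintro ⟨⟨x, ⟨⟨hx0, hx1⟩, -⟩, hx3⟩, ⟨y, ⟨⟨hy2, -⟩, hy1⟩, hy3⟩⟩
  obtain ⟨h1, h2, h3⟩ := hconv.det2_pos h0
  have hx : det2 (v 2) (v 3) (v 0) < det2 (v 3) (v 0) (v 1) :=
    det2_lt_of_inside_of_outside_of_outside h0 h3 (pos_of_mul_pos_left hx0 h0.le)
      (neg_of_mul_neg_left hx1 h1.le) (neg_of_mul_neg_left hx3 h3.le)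
  have hy : det2 (v 0) (v 1) (v 2) < det2 (v 1) (v 2) (v 3) :=
    det2_lt_of_inside_of_outside_of_outside h2 h1 (pos_of_mul_pos_left hy2 h2.le)
      (neg_of_mul_neg_left hy3 h3.le) (neg_of_mul_neg_left hy1 h1.le)
  linarith [det2_add_det2 (v 0) (v 1) (v 2) (v 3)]

/-- For a convex quadrilateral in cyclic order, the regions
`H₁ᴵ ∩ H₂ᴼ ∩ H₃ᴼ ∩ H₄ᴼ` and `H₃ᴵ ∩ H₁ᴼ ∩ H₂ᴼ ∩ H₄ᴼ` cannot both be nonempty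
(with 0-based indices: edges `0` and `2`). -/
theorem opposite_edges_not_both_good (v : Fin 4 → ℝ × ℝ) (hconv : ConvexCyclic v) :
    ¬ ((Hin v 0 ∩ Hout v 1 ∩ Hout v 2 ∩ Hout v 3).Nonempty ∧
       (Hin v 2 ∩ Hout v 0 ∩ Hout v 1 ∩ Hout v 3).Nonempty) := by
  rintro ⟨hx, hy⟩
  have hd0 : det2 (v 0) (v 1) (v 2) ≠ 0 := left_ne_zero_of_mul (hconv 0).ne'
  rcases hd0.lt_or_gt with hneg | hpos
  · refine opposite_edges_not_both_good_of_det2_pos hconv.comp_swap ?_ ?_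
    · simpa only [Function.comp_apply, det2_swap, Prod.swap_swap, neg_pos] using hneg
    · simp only [Hin_comp_swap, Hout_comp_swap, ← Set.preimage_inter]
      exact ⟨hx.preimage Prod.swap_surjective, hy.preimage Prod.swap_surjective⟩
  · exact opposite_edges_not_both_good_of_det2_pos hconv hpos ⟨hx, hy⟩
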